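/- (Lemma 6 of the appendix.) Let 2m+2 ≤ i ≤ n and 1 ≤ t ≤ i−2m−1, and for each j = t, …, i let x_j be a vector of k distinct locations of column j, with u_j the complementary vector of the remaining r−k locations of column j. Then H(Z_{x_t} | Z_{x_{t+1:i−m−1}}, Z_{u_{i−2m:i}}) − H(Z_{x_t} | Z_{x_{t+1:i−m−1}}, Z_{u_{i−2m:i}}, Z_{x_{i−m}}) ≤ k² · log(1 + ξ²/(η(1+η))). -/

import Mathlib

open Finset

/-- Covariance matrix of the GP: kernel plus sensor noise on the diagonal. -/
noncomputable def SigmaMat {D : Type*} [DecidableEq D] (K : D → D → ℝ) (σn2 : ℝ) :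
    Matrix D D ℝ :=
  Matrix.of fun x y => K x y + if x = y then σn2 else 0

/-- Submatrix of covariances between the entries of two finsets of locations. -/
noncomputable def subMat {D : Type*} (Cov : Matrix D D ℝ) (a s : Finset D) :
    Matrix ↥a ↥s ℝ :=
  Matrix.of fun p q => Cov p.1 q.1

/-- Posterior covariance `Σ_{aa|s} = Σ_{aa} - Σ_{as} Σ_{ss}⁻¹ Σ_{sa}`. -/
noncomputable def postCov {D : Type*} [DecidableEq D] (Cov : Matrix D D ℝ) (a s : Finset D) :
    Matrix ↥a ↥a ℝ :=
  subMat Cov a a - subMat Cov a s * (subMat Cov s s)⁻¹ * subMat Cov s a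

/-- Gaussian conditional entropy `H(Z_a | Z_s) = (1/2) log((2πe)^{|a|} det Σ_{aa|s})`. -/
noncomputable def condEnt {D : Type*} [DecidableEq D] (Cov : Matrix D D ℝ) (a s : Finset D) : ℝ :=
  (1/2) * Real.log ((2 * Real.pi * Real.exp 1) ^ a.card * (postCov Cov a s).det)

/-- Gaussian joint entropy `H(Z_a)`. -/
noncomputable def ent {D : Type*} [DecidableEq D] (Cov : Matrix D D ℝ) (a : Finset D) : ℝ :=
  condEnt Cov a ∅

/-- Mutual information `I(Z_a ; Z_b) = H(Z_a) - H(Z_a | Z_b)`. -/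
noncomputable def mutInf {D : Type*} [DecidableEq D] (Cov : Matrix D D ℝ) (a b : Finset D) : ℝ :=
  ent Cov a - condEnt Cov a b

/-- Conditional mutual information `I(Z_a ; Z_b | Z_s) = H(Z_a | Z_s) - H(Z_a | Z_s, Z_b)`. -/
noncomputable def condMutInf {D : Type*} [DecidableEq D] (Cov : Matrix D D ℝ)
    (a b s : Finset D) : ℝ :=
  condEnt Cov a s - condEnt Cov a (s ∪ b)

/-- Posterior variance `Σ_{yy|A}` of a single location `y`. -/
noncomputable def postVar {D : Type*} [DecidableEq D] (Cov : Matrix D D ℝ) (y : D)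
    (A : Finset D) : ℝ :=
  postCov Cov {y} A ⟨y, Finset.mem_singleton_self y⟩ ⟨y, Finset.mem_singleton_self y⟩

/-- Concatenation `x_{i:j}` of the column selections from column `i` to column `j`. -/
def seg {D : Type*} [DecidableEq D] (x : ℕ → Finset D) (i j : ℕ) : Finset D :=
  (Finset.Icc i j).biUnion x

/-- The set of the `r` locations of column `i`. -/
def column {D : Type*} [Fintype D] (col : D → ℕ) (i : ℕ) : Finset D :=
  Finset.univ.filter (fun p => col p = i)

/-- The complementary vector `u_i` of unobserved locations of column `i` for a path `x`. -/
def ucomp {D : Type*} [Fintype D] [DecidableEq D] (col : D → ℕ) (x : ℕ → Finset D) :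
    ℕ → Finset D :=
  fun i => column col i \ x i

/-- A path selects, in every column `i = 1,…,n`, a vector of `k` distinct locations of
column `i`. -/
def IsPath {D : Type*} [Fintype D] (col : D → ℕ) (n k : ℕ) (x : ℕ → Finset D) : Prop :=
  ∀ i, 1 ≤ i → i ≤ n → x i ⊆ column col i ∧ (x i).card = k

/-!
By the chain rule, the entropy reduction is a sum over the `k` locations `p` of `x_t` of
`½ log (Σ_{pp|A} / Σ_{pp|A, x_{i-m}})` for growing conditioning sets `A`. Submodularity
bounds the drop of posterior variance caused by the `k` locations `q` of `x_{i-m}` by the sum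
of the single-location drops `K(p,q)² / (σ_s² + σ_n²) ≤ σ_s⁴ ξ² / (σ_s² + σ_n²)` (the columns
`t` and `i-m` are at least `m+1` apart), while the noise floor `Σ_{pp|A} ≥ σ_n²` bounds the
denominator from below. Each term is therefore at most `½ log (1 + k ξ² / (η (1 + η)))`, and
Bernoulli's inequality turns `log (1 + k c)` into `k log (1 + c)`.
-/
open Matrix

section Gaussian

variable {D : Type*} {M : Matrix D D ℝ}

lemma Matrix.PosDef.subMat (hM : M.PosDef) (B : Finset D) : (subMat M B B).PosDef :=
  hM.submatrix Subtype.val_injective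

variable [DecidableEq D]

lemma det_subMat_union (hM : M.PosDef) {a s : Finset D} (h : Disjoint a s) :
    (subMat M (a ∪ s) (a ∪ s)).det = (subMat M s s).det * (postCov M a s).det := by
  have : Invertible (subMat M s s) := (hM.subMat s).isUnit.invertible
  have hblocks : (subMat M (a ∪ s) (a ∪ s)).submatrix (Equiv.Finset.union a s h)
      (Equiv.Finset.union a s h) =
      fromBlocks (subMat M a a) (subMat M a s) (subMat M s a) (subMat M s s) := by
    ext (i | i) (j | j) <;> rfl
  rw [← det_submatrix_equiv_self (Equiv.Finset.union a s h), hblocks, det_fromBlocks₂₂,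
    invOf_eq_nonsing_inv, postCov]

lemma det_postCov_pos (hM : M.PosDef) {a s : Finset D} (h : Disjoint a s) :
    0 < (postCov M a s).det := by
  have hdet := det_subMat_union hM h
  have hs := (hM.subMat s).det_pos
  have has := (hM.subMat (a ∪ s)).det_pos
  exact pos_of_mul_pos_right (hdet ▸ has) hs.le

lemma condEnt_eq_log_div (hM : M.PosDef) {a s : Finset D} (h : Disjoint a s) :
    condEnt M a s = (1 / 2) * Real.log ((2 * Real.pi * Real.exp 1) ^ a.card *
      ((subMat M (a ∪ s) (a ∪ s)).det / (subMat M s s).det)) := by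
  rw [condEnt, det_subMat_union hM h, mul_div_cancel_left₀ _ (hM.subMat s).det_pos.ne']

lemma det_postCov_singleton (M : Matrix D D ℝ) (p : D) (S : Finset D) :
    (postCov M {p} S).det = postVar M p S := by
  rw [det_unique]
  rfl

lemma postVar_pos (hM : M.PosDef) {p : D} {S : Finset D} (hp : p ∉ S) :
    0 < postVar M p S := by
  rw [← det_postCov_singleton]
  exact det_postCov_pos hM (Finset.disjoint_singleton_left.mpr hp)

lemma condEnt_singleton (M : Matrix D D ℝ) (p : D) (S : Finset D) :
    condEnt M {p} S = (1 / 2) * Real.log (2 * Real.pi * Real.exp 1 * postVar M p S) := by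
  rw [condEnt, det_postCov_singleton, Finset.card_singleton, pow_one]

lemma condEnt_insert (hM : M.PosDef) {p : D} {a s : Finset D} (hpa : p ∉ a) (hps : p ∉ s)
    (h : Disjoint a s) :
    condEnt M (insert p a) s = condEnt M a s + condEnt M {p} (a ∪ s) := by
  have hp : p ∉ a ∪ s := by simp [hpa, hps]
  have hs := (hM.subMat s).det_pos
  have has := (hM.subMat (a ∪ s)).det_pos
  have hpas := (hM.subMat (insert p (a ∪ s))).det_pos
  rw [condEnt_eq_log_div hM (Finset.disjoint_insert_left.mpr ⟨hps, h⟩), condEnt_eq_log_div hM h,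
    condEnt_eq_log_div hM (Finset.disjoint_singleton_left.mpr hp), ← mul_add,
    ← Real.log_mul (by positivity) (by positivity), Finset.insert_union, ← Finset.insert_eq,
    Finset.card_insert_of_notMem hpa, Finset.card_singleton]
  congr 2
  field_simp
  ring

end Gaussian

section NoisyKernel

variable {D : Type*} [DecidableEq D] {K : D → D → ℝ} {σn2 : ℝ}

lemma SigmaMat_eq_add_smul_one (K : D → D → ℝ) (σn2 : ℝ) :
    SigmaMat K σn2 = Matrix.of K + σn2 • (1 : Matrix D D ℝ) := by
  ext x y
  by_cases h : x = y <;> simp [SigmaMat, one_apply, h]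

lemma posDef_SigmaMat (hK : (Matrix.of K).PosSemidef) (hn : 0 < σn2) :
    (SigmaMat K σn2).PosDef := by
  rw [SigmaMat_eq_add_smul_one]
  exact PosDef.posSemidef_add hK (PosDef.one.smul hn)

/-- Subtracting `σ_n² I` from the posterior covariance leaves the Schur complement of the
positive semidefinite block matrix `K_{a∪s} + σ_n² diag(0, I)`. -/
lemma posSemidef_postCov_SigmaMat_sub_smul_one (hK : (Matrix.of K).PosSemidef) (hn : 0 < σn2)
    {a s : Finset D} (h : Disjoint a s) :
    (postCov (SigmaMat K σn2) a s - σn2 • 1).PosSemidef := by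
  have hSig := posDef_SigmaMat hK hn
  have : Invertible (subMat (SigmaMat K σn2) s s) := (hSig.subMat s).isUnit.invertible
  have hsymm : (subMat (SigmaMat K σn2) a s)ᴴ = subMat (SigmaMat K σn2) s a := by
    ext i j
    exact hSig.isHermitian.apply i.1 j.1
  have hne {p q : D} (hp : p ∈ a) (hq : q ∈ s) : p ≠ q := fun hpq =>
    Finset.disjoint_left.mp h hp (hpq ▸ hq)
  have hblocks : fromBlocks (subMat (SigmaMat K σn2) a a - σn2 • 1)
      (subMat (SigmaMat K σn2) a s) (subMat (SigmaMat K σn2) a s)ᴴ (subMat (SigmaMat K σn2) s s) =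
      (Matrix.of K).submatrix (Sum.elim (↑) (↑)) (Sum.elim (↑) (↑)) +
        diagonal (Sum.elim 0 fun _ => σn2) := by
    ext (i | i) (j | j)
    · by_cases hij : i = j <;> simp [subMat, SigmaMat, hij]
    · simp [subMat, SigmaMat, hne i.2 j.2]
    · simpa [subMat, SigmaMat, hne j.2 i.2] using hK.isHermitian.apply i.1 j.1
    · by_cases hij : i = j <;> simp [subMat, SigmaMat, hij]
  have hnoise : (diagonal (Sum.elim 0 fun _ => σn2) : Matrix (a ⊕ s) (a ⊕ s) ℝ).PosSemidef :=
    PosSemidef.diagonal fun i => by cases i <;> simp [hn.le]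
  have hpsd := (hK.submatrix (Sum.elim (↑) (↑) : a ⊕ s → D)).add hnoise
  rw [← hblocks, PosDef.fromBlocks₂₂ _ _ (hSig.subMat s), hsymm] at hpsd
  rwa [postCov, sub_right_comm]

lemma le_postVar_SigmaMat (hK : (Matrix.of K).PosSemidef) (hn : 0 < σn2) {p : D}
    {S : Finset D} (hp : p ∉ S) : σn2 ≤ postVar (SigmaMat K σn2) p S := by
  have hfloor := posSemidef_postCov_SigmaMat_sub_smul_one hK hn
    (Finset.disjoint_singleton_left.mpr hp)
  simpa [postVar] using hfloor.diag_nonneg (i := ⟨p, Finset.mem_singleton_self p⟩)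

end NoisyKernel

section VarianceReduction

variable {D : Type*} [DecidableEq D] {M : Matrix D D ℝ}

lemma postVar_empty (M : Matrix D D ℝ) (p : D) : postVar M p ∅ = M p p := by
  simp [postVar, postCov, subMat, mul_apply]

lemma postVar_singleton (M : Matrix D D ℝ) (p q : D) :
    postVar M p {q} = M p p - M p q * M q p / M q q := by
  simp [postVar, postCov, subMat, mul_apply, inv_subsingleton, Ring.inverse_eq_inv']
  ring

lemma postVar_sub_postVar_union_le_sum
    (hsub : ∀ (p q : D) (A : Finset D), p ∉ A → q ∉ A → p ≠ q →
      postVar M p A - postVar M p (insert q A) ≤ postVar M p ∅ - postVar M p {q})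
    {p : D} {S b : Finset D} (hpS : p ∉ S) (hpb : p ∉ b) (h : Disjoint S b) :
    postVar M p S - postVar M p (S ∪ b) ≤ ∑ q ∈ b, (postVar M p ∅ - postVar M p {q}) := by
  induction b using Finset.induction_on with
  | empty => simp
  | @insert q b hqb ih =>
    have hpq : p ≠ q := fun hpq => hpb (hpq ▸ Finset.mem_insert_self q b)
    have hqS : q ∉ S := Finset.disjoint_right.mp h (Finset.mem_insert_self q b)
    have hstep := hsub p q (S ∪ b) (by simp_all) (by simp [hqS, hqb]) hpq
    have hb := ih (fun hp => hpb (Finset.mem_insert_of_mem hp))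
      (Finset.disjoint_of_subset_right (Finset.subset_insert q b) h)
    rw [Finset.union_insert, Finset.sum_insert hqb]
    linarith

end VarianceReduction

lemma Real.log_sub_log_le_log_one_add_div {x y d σ : ℝ} (hσ : 0 < σ) (hσy : σ ≤ y)
    (hx : 0 < x) (hd : 0 ≤ d) (hxy : x ≤ y + d) :
    Real.log x - Real.log y ≤ Real.log (1 + d / σ) := by
  have hy : 0 < y := hσ.trans_le hσy
  rw [← Real.log_div hx.ne' hy.ne']
  refine Real.log_le_log (div_pos hx hy) ?_
  calc x / y ≤ (y + d) / y := div_le_div_of_nonneg_right hxy hy.le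
    _ = 1 + d / y := by field_simp
    _ ≤ 1 + d / σ := by gcongr

lemma Real.log_one_add_mul_le_mul_log {c : ℝ} (hc : 0 ≤ c) (n : ℕ) :
    Real.log (1 + n * c) ≤ n * Real.log (1 + c) := by
  rw [← Real.log_pow]
  exact Real.log_le_log (by positivity) (one_add_mul_le_pow (by linarith) n)

section EntropyReduction

variable {D : Type*} [DecidableEq D] {M : Matrix D D ℝ} {σ δ : ℝ}

lemma condEnt_singleton_sub_le (hM : M.PosDef) (hσ : 0 < σ) (hδ : 0 ≤ δ)
    (hsub : ∀ (p q : D) (A : Finset D), p ∉ A → q ∉ A → p ≠ q →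
      postVar M p A - postVar M p (insert q A) ≤ postVar M p ∅ - postVar M p {q})
    {p : D} {S b : Finset D} (hpS : p ∉ S) (hpb : p ∉ b) (h : Disjoint S b)
    (hfloor : σ ≤ postVar M p (S ∪ b))
    (hpair : ∀ q ∈ b, postVar M p ∅ - postVar M p {q} ≤ δ) :
    condEnt M {p} S - condEnt M {p} (S ∪ b) ≤ (1 / 2) * Real.log (1 + b.card * δ / σ) := by
  have hred : postVar M p S ≤ postVar M p (S ∪ b) + b.card * δ := by
    have := (postVar_sub_postVar_union_le_sum hsub hpS hpb h).trans
      (Finset.sum_le_card_nsmul b _ δ hpair)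
    rw [nsmul_eq_mul] at this
    linarith
  have hlog := Real.log_sub_log_le_log_one_add_div hσ hfloor (postVar_pos hM hpS) (by positivity)
    hred
  have hc : (0 : ℝ) < 2 * Real.pi * Real.exp 1 := by positivity
  rw [condEnt_singleton, condEnt_singleton,
    Real.log_mul hc.ne' (postVar_pos hM hpS).ne',
    Real.log_mul hc.ne' (postVar_pos hM (by simp [hpS, hpb])).ne']
  linarith

lemma condEnt_sub_condEnt_union_le (hM : M.PosDef) (hσ : 0 < σ) (hδ : 0 ≤ δ)
    (hsub : ∀ (p q : D) (A : Finset D), p ∉ A → q ∉ A → p ≠ q →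
      postVar M p A - postVar M p (insert q A) ≤ postVar M p ∅ - postVar M p {q})
    (hfloor : ∀ (p : D) (A : Finset D), p ∉ A → σ ≤ postVar M p A)
    {a s b : Finset D} (has : Disjoint a s) (hab : Disjoint a b) (hsb : Disjoint s b)
    (hpair : ∀ p ∈ a, ∀ q ∈ b, postVar M p ∅ - postVar M p {q} ≤ δ) :
    condEnt M a s - condEnt M a (s ∪ b) ≤
      a.card * ((1 / 2) * Real.log (1 + b.card * δ / σ)) := by
  induction a using Finset.induction_on with
  | empty => simp [condEnt]
  | @insert p a hpa ih =>
    rw [Finset.disjoint_insert_left] at has hab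
    have hpas : p ∉ a ∪ s := by simp [hpa, has.1]
    have hpasb : p ∉ a ∪ s ∪ b := by simp [hpa, has.1, hab.1]
    have hsingle := condEnt_singleton_sub_le hM hσ hδ hsub hpas hab.1
      (Finset.disjoint_union_left.mpr ⟨hab.2, hsb⟩) (hfloor p _ hpasb)
      (hpair p (Finset.mem_insert_self p a))
    have hrest := ih has.2 hab.2 fun p' hp' => hpair p' (Finset.mem_insert_of_mem hp')
    rw [condEnt_insert hM hpa has.1 has.2, condEnt_insert hM hpa (by simp [has.1, hab.1])
      (Finset.disjoint_union_right.mpr ⟨has.2, hab.2⟩), ← Finset.union_assoc,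
      Finset.card_insert_of_notMem hpa]
    push_cast
    linarith

end EntropyReduction

lemma postVar_empty_sub_postVar_singleton_SigmaMat {D : Type*} [DecidableEq D] {K : D → D → ℝ}
    {σs2 σn2 : ℝ} (hK : (Matrix.of K).PosSemidef) (hKdiag : ∀ p, K p p = σs2) {p q : D}
    (hpq : p ≠ q) :
    postVar (SigmaMat K σn2) p ∅ - postVar (SigmaMat K σn2) p {q} =
      K p q ^ 2 / (σs2 + σn2) := by
  have hsymm : K q p = K p q := by simpa using hK.isHermitian.apply p q
  rw [postVar_empty, postVar_singleton]
  simp [SigmaMat, hpq, hpq.symm, hsymm, hKdiag]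
  ring

section Columns

variable {D : Type*} [Fintype D] {col : D → ℕ}

lemma mem_column {j : ℕ} {d : D} : d ∈ column col j ↔ col d = j := by
  simp [column]

variable [DecidableEq D]

lemma col_mem_of_mem_seg {y : ℕ → Finset D} {i j : ℕ}
    (hy : ∀ l, i ≤ l → l ≤ j → y l ⊆ column col l) {d : D} (hd : d ∈ seg y i j) :
    i ≤ col d ∧ col d ≤ j ∧ d ∈ y (col d) := by
  obtain ⟨l, hl, hdl⟩ := Finset.mem_biUnion.mp hd
  rw [Finset.mem_Icc] at hl
  obtain rfl : col d = l := mem_column.mp (hy l hl.1 hl.2 hdl)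
  exact ⟨hl.1, hl.2, hdl⟩

lemma disjoint_observation_blocks {x : ℕ → Finset D} {t i m : ℕ}
    (hx : ∀ j, t ≤ j → j ≤ i → x j ⊆ column col j) (hti : t + 2 * m + 1 ≤ i) :
    Disjoint (x t) (seg x (t + 1) (i - m - 1) ∪ seg (ucomp col x) (i - 2 * m) i) ∧
      Disjoint (x t) (x (i - m)) ∧
      Disjoint (seg x (t + 1) (i - m - 1) ∪ seg (ucomp col x) (i - 2 * m) i) (x (i - m)) := by
  have hcol {j : ℕ} {d : D} (hj1 : t ≤ j) (hj2 : j ≤ i) (hd : d ∈ x j) : col d = j :=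
    mem_column.mp (hx j hj1 hj2 hd)
  have hxseg {d : D} (hd : d ∈ seg x (t + 1) (i - m - 1)) :=
    col_mem_of_mem_seg (fun l h1 h2 => hx l (by omega) (by omega)) hd
  have huseg {d : D} (hd : d ∈ seg (ucomp col x) (i - 2 * m) i) :=
    col_mem_of_mem_seg (fun l _ _ => Finset.sdiff_subset) hd
  refine ⟨Finset.disjoint_left.mpr ?_, Finset.disjoint_left.mpr ?_, Finset.disjoint_left.mpr ?_⟩
  · intro d hda hds
    have := hcol le_rfl (by omega) hda
    rcases Finset.mem_union.mp hds with hd | hd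
    · have := hxseg hd; omega
    · have := huseg hd; omega
  · intro d hda hdb
    have := hcol le_rfl (by omega) hda
    have := hcol (by omega) (by omega) hdb
    omega
  · intro d hds hdb
    have hdcol := hcol (by omega) (by omega) hdb
    rcases Finset.mem_union.mp hds with hd | hd
    · have := hxseg hd; omega
    · exact (Finset.mem_sdiff.mp (hdcol ▸ (huseg hd).2.2)).2 hdb

end Columns

theorem lemma6_entropy_reduction_general
    {D : Type*} [Fintype D] [DecidableEq D]
    (k m : ℕ) (col : D → ℕ)
    (K : D → D → ℝ) (σs2 σn2 ξ : ℝ)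
    (hs : 0 < σs2) (hn : 0 < σn2)
    (hKpsd : (Matrix.of K).PosSemidef)
    (hKdiag : ∀ p : D, K p p = σs2)
    (hdecay : ∀ p q : D, (m : ℤ) + 1 ≤ |(col p : ℤ) - (col q : ℤ)| → |K p q| ≤ σs2 * ξ)
    (hsub : ∀ (p q : D) (A : Finset D), p ∉ A → q ∉ A → p ≠ q →
      postVar (SigmaMat K σn2) p A - postVar (SigmaMat K σn2) p (insert q A)
        ≤ postVar (SigmaMat K σn2) p ∅ - postVar (SigmaMat K σn2) p {q})
    (i t : ℕ) (hi1 : 2 * m + 2 ≤ i) (ht2 : t ≤ i - 2 * m - 1)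
    (x : ℕ → Finset D)
    (hx : ∀ j : ℕ, t ≤ j → j ≤ i → x j ⊆ column col j ∧ (x j).card = k) :
    condEnt (SigmaMat K σn2) (x t)
        (seg x (t + 1) (i - m - 1) ∪ seg (ucomp col x) (i - 2 * m) i)
        - condEnt (SigmaMat K σn2) (x t)
            ((seg x (t + 1) (i - m - 1) ∪ seg (ucomp col x) (i - 2 * m) i) ∪ x (i - m))
      ≤ (k : ℝ) ^ 2 * Real.log (1 + ξ ^ 2 / ((σn2 / σs2) * (1 + σn2 / σs2))) := by
  have hti : t + 2 * m + 1 ≤ i := by omega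
  obtain ⟨has, hab, hsb⟩ := disjoint_observation_blocks (fun j h1 h2 => (hx j h1 h2).1) hti
  have hpair : ∀ p ∈ x t, ∀ q ∈ x (i - m), postVar (SigmaMat K σn2) p ∅ -
      postVar (SigmaMat K σn2) p {q} ≤ (σs2 * ξ) ^ 2 / (σs2 + σn2) := by
    intro p hp q hq
    have hp_col := mem_column.mp ((hx t le_rfl (by omega)).1 hp)
    have hq_col := mem_column.mp ((hx (i - m) (by omega) tsub_le_self).1 hq)
    rw [postVar_empty_sub_postVar_singleton_SigmaMat hKpsd hKdiag (by rintro rfl; omega),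
      ← sq_abs]
    gcongr
    refine hdecay p q ?_
    rw [hp_col, hq_col, abs_sub_comm]
    exact le_abs.mpr (Or.inl (by omega))
  have hbound := condEnt_sub_condEnt_union_le (posDef_SigmaMat hKpsd hn) hn (by positivity) hsub
    (fun p A hp => le_postVar_SigmaMat hKpsd hn hp) has hab hsb hpair
  rw [(hx t le_rfl (by omega)).2, (hx (i - m) (by omega) tsub_le_self).2, mul_div_assoc] at hbound
  have hc : (σs2 * ξ) ^ 2 / (σs2 + σn2) / σn2 =
      ξ ^ 2 / ((σn2 / σs2) * (1 + σn2 / σs2)) := by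
    field_simp
  rw [← hc]
  set c := (σs2 * ξ) ^ 2 / (σs2 + σn2) / σn2
  have hlog := Real.log_one_add_mul_le_mul_log (by positivity : 0 ≤ c) k
  have hlog0 := Real.log_nonneg (le_add_of_nonneg_right (by positivity) : (1 : ℝ) ≤ 1 + c)
  nlinarith

/-- **Lemma 6 of the appendix.** -/
theorem lemma6_entropy_reduction
    {D : Type*} [Fintype D] [DecidableEq D]
    (r n k m : ℕ) (col : D → ℕ)
    (K : D → D → ℝ) (σs2 σn2 l1 ξ : ℝ)
    (hr : 1 ≤ r) (hk1 : 1 ≤ k) (hkr : k ≤ r) (hm : 1 ≤ m)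
    (hs : 0 < σs2) (hn : 0 < σn2) (hl1 : 0 < l1)
    (hξ : ξ = Real.exp (-((m : ℝ) + 1) ^ 2 / (2 * l1 ^ 2)))
    (hKsymm : ∀ p q : D, K p q = K q p)
    (hKpsd : (Matrix.of K).PosSemidef)
    (hKdiag : ∀ p : D, K p p = σs2)
    (hcol : ∀ p : D, 1 ≤ col p ∧ col p ≤ n)
    (hcolcard : ∀ i : ℕ, 1 ≤ i → i ≤ n → (column col i).card = r)
    (hdecay : ∀ p q : D, (m : ℤ) + 1 ≤ |(col p : ℤ) - (col q : ℤ)| → |K p q| ≤ σs2 * ξ)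
    (hsub : ∀ (p q : D) (A : Finset D), p ∉ A → q ∉ A → p ≠ q →
      postVar (SigmaMat K σn2) p A - postVar (SigmaMat K σn2) p (insert q A)
        ≤ postVar (SigmaMat K σn2) p ∅ - postVar (SigmaMat K σn2) p {q})
    (i t : ℕ) (hi1 : 2 * m + 2 ≤ i) (hi2 : i ≤ n) (ht1 : 1 ≤ t) (ht2 : t ≤ i - 2 * m - 1)
    (x : ℕ → Finset D)
    (hx : ∀ j : ℕ, t ≤ j → j ≤ i → x j ⊆ column col j ∧ (x j).card = k) :
    condEnt (SigmaMat K σn2) (x t)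
        (seg x (t + 1) (i - m - 1) ∪ seg (ucomp col x) (i - 2 * m) i)
        - condEnt (SigmaMat K σn2) (x t)
            ((seg x (t + 1) (i - m - 1) ∪ seg (ucomp col x) (i - 2 * m) i) ∪ x (i - m))
      ≤ (k : ℝ) ^ 2 * Real.log (1 + ξ ^ 2 / ((σn2 / σs2) * (1 + σn2 / σs2))) :=
  lemma6_entropy_reduction_general k m col K σs2 σn2 ξ hs hn hKpsd hKdiag hdecay hsub i t hi1 ht2 x
    hx
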